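/- Let U ⊆ ℝ³ be open, let σ be a smooth closed real 1-form and ω a smooth closed real 2-form on U with σ ∧ ω nowhere vanishing (a cosymplectic structure). Then the mixed-degree complex form ρ := 1 + iσ + iω − σ ∧ ω (which equals e^{iσ}e^{iω} applied to 1) satisfies dρ = 0 and its B₃ spinor pairing with its conjugate is (ρ, ρ̄) = 4 σ ∧ ω, which is nowhere vanishing; hence ρ has real index zero and defines a B₃-generalized complex structure of type 0 on U. -/

import Mathlib

noncomputable section

/-- A mixed-degree complex differential form on (an open subset of) `ℝⁿ`, described by its
coefficient functions with respect to the basis `dx_S = dx_{i₁} ∧ … ∧ dx_{i_k}`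
(for `S = {i₁ < … < i_k} ⊆ {0,…,n-1}`). -/
abbrev MForm (n : ℕ) := (Fin n → ℝ) → Finset (Fin n) → ℂ

namespace MForm

variable {n : ℕ}

/-- The sign `ε(S,T)` with which `dx_S ∧ dx_T = ε(S,T) dx_{S ∪ T}` for disjoint `S`, `T`. -/
def mergeSign (S T : Finset (Fin n)) : ℂ :=
  (-1 : ℂ) ^ ((S ×ˢ T).filter fun p => p.2 < p.1).card

/-- The wedge product of mixed-degree forms. -/
def wedge (α β : MForm n) : MForm n := fun x S =>
  ∑ T ∈ S.powerset, mergeSign T (S \ T) * α x T * β x (S \ T)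

/-- The parity involution `τρ := ρ₊ − ρ₋`. -/
def tau (ρ : MForm n) : MForm n := fun x S => (-1 : ℂ) ^ S.card * ρ x S

/-- The even part `ρ₊` of a mixed-degree form. -/
def evenPart (ρ : MForm n) : MForm n := fun x S => if Even S.card then ρ x S else 0

/-- The odd part `ρ₋` of a mixed-degree form. -/
def oddPart (ρ : MForm n) : MForm n := fun x S => if Even S.card then 0 else ρ x S

/-- The reversal anti-automorphism, `(α₁∧…∧α_r)⊤ = α_r∧…∧α₁`; on degree `k` it is
multiplication by `(-1)^(k(k-1)/2)`. -/
def rev (ρ : MForm n) : MForm n := fun x S => (-1 : ℂ) ^ (S.card * (S.card - 1) / 2) * ρ x S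

/-- Complex conjugation of a form. -/
def conjF (ρ : MForm n) : MForm n := fun x S => (starRingEnd ℂ) (ρ x S)

/-- The exterior derivative: `(dρ)_S = Σ_{i∈S} (-1)^{#{j∈S : j<i}} ∂_i ρ_{S∖{i}}`, the
coordinate expression of `d`. -/
def extDer (ρ : MForm n) : MForm n := fun x S =>
  ∑ i ∈ S, (-1 : ℂ) ^ (S.filter fun j => j < i).card *
    fderiv ℝ (fun y => ρ y (S.erase i)) x (Pi.single i 1)

/-- Contraction `ι_X ρ` with a (possibly complex) vector field `X`. -/
def contr (X : (Fin n → ℝ) → Fin n → ℂ) (ρ : MForm n) : MForm n := fun x S =>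
  ∑ i ∈ Sᶜ, (-1 : ℂ) ^ (S.filter fun j => j < i).card * X x i * ρ x (insert i S)

/-- The Clifford action of `v = X + f + α` on spinors: `v·ρ := ι_X ρ + f τρ + α ∧ ρ`. -/
def cliffAct (X : (Fin n → ℝ) → Fin n → ℂ) (f : (Fin n → ℝ) → ℂ) (α : MForm n)
    (ρ : MForm n) : MForm n :=
  fun x S => contr X ρ x S + f x * tau ρ x S + wedge α ρ x S

/-- A form is smooth on `U` when all of its coefficient functions are. -/
def SmoothOn (U : Set (Fin n → ℝ)) (ρ : MForm n) : Prop :=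
  ∀ S, ContDiffOn ℝ (⊤ : ℕ∞) (fun x => ρ x S) U

/-- A form is homogeneous of degree `k` when only degree-`k` coefficients are nonzero. -/
def IsHomog (k : ℕ) (ρ : MForm n) : Prop := ∀ x S, S.card ≠ k → ρ x S = 0

/-- A form is real when all of its coefficients are real. -/
def IsReal (ρ : MForm n) : Prop := ∀ x S, (ρ x S).im = 0

/-- Wedge powers `B^{∧k}`. -/
def wpow (B : MForm n) : ℕ → MForm n
  | 0 => fun _ S => if S = ∅ then 1 else 0
  | k + 1 => wedge B (wpow B k)

/-- `exp(B) = Σ_k B^{∧k}/k!`, a finite sum since `B^{∧k} = 0` for `k > n`. -/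
def expW (B : MForm n) : MForm n :=
  ∑ k ∈ Finset.range (n + 1), ((k.factorial : ℂ))⁻¹ • wpow B k

/-- The A-field action `e^A ρ := ρ + A ∧ τρ` of a 1-form `A`. -/
def eA (A ρ : MForm n) : MForm n := ρ + wedge A (tau ρ)

/-- The B-field action `e^B ρ := exp(B) ∧ ρ` of a 2-form `B`. -/
def eB (B ρ : MForm n) : MForm n := wedge (expW B) ρ

end MForm

open MForm

/-- The constant function `1`, as a 0-form. -/
def oneF : MForm 3 := fun _ S => if S = ∅ then 1 else 0

/-- The B₃ spinor pairing `(ρ,ψ) = [ρ⊤₋ ∧ ψ₊ − ρ⊤₊ ∧ ψ₋]₃` (its coefficient on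
`dx ∧ dy ∧ dz`). -/
def pairB3 (ρ ψ : MForm 3) : (Fin 3 → ℝ) → ℂ := fun x =>
  (wedge (rev (oddPart ρ)) (evenPart ψ) - wedge (rev (evenPart ρ)) (oddPart ψ)) x Finset.univ


section Helpers

lemma sum_powerset_univ3 {M : Type*} [AddCommMonoid M] (f : Finset (Fin 3) → M) :
    ∑ T ∈ (Finset.univ : Finset (Fin 3)).powerset, f T =
      f ∅ + f {0} + f {1} + f {2} + f {0,1} + f {0,2} + f {1,2} + f {0,1,2} := by
  have h : (Finset.univ : Finset (Fin 3)).powerset =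
      {∅, {0}, {1}, {2}, {0,1}, {0,2}, {1,2}, {0,1,2}} := by decide
  rw [h]
  rw [Finset.sum_insert (by decide), Finset.sum_insert (by decide),
    Finset.sum_insert (by decide), Finset.sum_insert (by decide),
    Finset.sum_insert (by decide), Finset.sum_insert (by decide),
    Finset.sum_insert (by decide), Finset.sum_singleton]
  abel

lemma wedge_ne3 (σ ω : MForm 3) (hσ1 : MForm.IsHomog 1 σ) (hω2 : MForm.IsHomog 2 ω)
    {T : Finset (Fin 3)} (hT : T.card ≠ 3) (y : Fin 3 → ℝ) : wedge σ ω y T = 0 := by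
  unfold MForm.wedge
  apply Finset.sum_eq_zero
  intro T' hT'
  rw [Finset.mem_powerset] at hT'
  by_cases h1 : T'.card = 1
  · by_cases h2 : (T \ T').card = 2
    · exfalso
      have := Finset.card_sdiff_add_card_eq_card hT'
      omega
    · rw [hω2 y _ h2, mul_zero]
  · rw [hσ1 y _ h1, mul_zero, zero_mul]

lemma wedge_univ (α β : MForm 3) (x : Fin 3 → ℝ) :
    wedge α β x Finset.univ =
      α x ∅ * β x {0,1,2} + α x {0} * β x {1,2} - α x {1} * β x {0,2} + α x {2} * β x {0,1}
      + α x {0,1} * β x {2} - α x {0,2} * β x {1} + α x {1,2} * β x {0} + α x {0,1,2} * β x ∅ := by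
  unfold MForm.wedge
  rw [sum_powerset_univ3]
  have e1 : (Finset.univ : Finset (Fin 3)) \ ∅ = {0,1,2} := by decide
  have e2 : (Finset.univ : Finset (Fin 3)) \ {0} = {1,2} := by decide
  have e3 : (Finset.univ : Finset (Fin 3)) \ {1} = {0,2} := by decide
  have e4 : (Finset.univ : Finset (Fin 3)) \ {2} = {0,1} := by decide
  have e5 : (Finset.univ : Finset (Fin 3)) \ {0,1} = {2} := by decide
  have e6 : (Finset.univ : Finset (Fin 3)) \ {0,2} = {1} := by decide
  have e7 : (Finset.univ : Finset (Fin 3)) \ {1,2} = {0} := by decide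
  have e8 : (Finset.univ : Finset (Fin 3)) \ {0,1,2} = ∅ := by decide
  rw [e1, e2, e3, e4, e5, e6, e7, e8]
  have m1 : MForm.mergeSign (∅ : Finset (Fin 3)) {0,1,2} = 1 := by
    rw [MForm.mergeSign, show (((∅ : Finset (Fin 3)) ×ˢ ({0,1,2} : Finset (Fin 3))).filter
      fun p => p.2 < p.1).card = 0 from by decide]; norm_num
  have m2 : MForm.mergeSign ({0} : Finset (Fin 3)) {1,2} = 1 := by
    rw [MForm.mergeSign, show ((({0} : Finset (Fin 3)) ×ˢ ({1,2} : Finset (Fin 3))).filter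
      fun p => p.2 < p.1).card = 0 from by decide]; norm_num
  have m3 : MForm.mergeSign ({1} : Finset (Fin 3)) {0,2} = -1 := by
    rw [MForm.mergeSign, show ((({1} : Finset (Fin 3)) ×ˢ ({0,2} : Finset (Fin 3))).filter
      fun p => p.2 < p.1).card = 1 from by decide]; norm_num
  have m4 : MForm.mergeSign ({2} : Finset (Fin 3)) {0,1} = 1 := by
    rw [MForm.mergeSign, show ((({2} : Finset (Fin 3)) ×ˢ ({0,1} : Finset (Fin 3))).filter
      fun p => p.2 < p.1).card = 2 from by decide]; norm_num
  have m5 : MForm.mergeSign ({0,1} : Finset (Fin 3)) {2} = 1 := by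
    rw [MForm.mergeSign, show ((({0,1} : Finset (Fin 3)) ×ˢ ({2} : Finset (Fin 3))).filter
      fun p => p.2 < p.1).card = 0 from by decide]; norm_num
  have m6 : MForm.mergeSign ({0,2} : Finset (Fin 3)) {1} = -1 := by
    rw [MForm.mergeSign, show ((({0,2} : Finset (Fin 3)) ×ˢ ({1} : Finset (Fin 3))).filter
      fun p => p.2 < p.1).card = 1 from by decide]; norm_num
  have m7 : MForm.mergeSign ({1,2} : Finset (Fin 3)) {0} = 1 := by
    rw [MForm.mergeSign, show ((({1,2} : Finset (Fin 3)) ×ˢ ({0} : Finset (Fin 3))).filter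
      fun p => p.2 < p.1).card = 2 from by decide]; norm_num
  have m8 : MForm.mergeSign ({0,1,2} : Finset (Fin 3)) ∅ = 1 := by
    rw [MForm.mergeSign, show ((({0,1,2} : Finset (Fin 3)) ×ˢ (∅ : Finset (Fin 3))).filter
      fun p => p.2 < p.1).card = 0 from by decide]; norm_num
  rw [m1, m2, m3, m4, m5, m6, m7, m8]
  ring

end Helpers

/-- let `(σ, ω)` be a cosymplectic structure on an open `U ⊆ ℝ³`: `σ` a
smooth closed real 1-form and `ω` a smooth closed real 2-form with `σ ∧ ω` nowhere
vanishing.  Then `ρ = 1 + iσ + iω − σ∧ω` satisfies `dρ = 0` and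
`(ρ, ρ̄) = 4 σ∧ω`, which is nowhere vanishing: `ρ` has real index zero and defines a
B₃-generalized complex structure of type 0 on `U`. -/
theorem cosymplectic_spinor (U : Set (Fin 3 → ℝ)) (hU : IsOpen U)
    (σ ω : MForm 3)
    (hσs : MForm.SmoothOn U σ) (hωs : MForm.SmoothOn U ω)
    (hσ1 : MForm.IsHomog 1 σ) (hω2 : MForm.IsHomog 2 ω)
    (hσr : MForm.IsReal σ) (hωr : MForm.IsReal ω)
    (hσcl : ∀ x ∈ U, ∀ S, extDer σ x S = 0) (hωcl : ∀ x ∈ U, ∀ S, extDer ω x S = 0)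
    (hnv : ∀ x ∈ U, wedge σ ω x Finset.univ ≠ 0)
    (ρ : MForm 3)
    (hρ : ρ = oneF + Complex.I • σ + Complex.I • ω - wedge σ ω) :
    (∀ x ∈ U, ∀ S, extDer ρ x S = 0)
    ∧ (∀ x ∈ U, pairB3 ρ (conjF ρ) x = 4 * wedge σ ω x Finset.univ)
    ∧ (∀ x ∈ U, pairB3 ρ (conjF ρ) x ≠ 0) := by
  subst hρ
  have hpart2 : ∀ x ∈ U, pairB3 (oneF + Complex.I • σ + Complex.I • ω - wedge σ ω) (conjF (oneF + Complex.I • σ + Complex.I • ω - wedge σ ω)) x = 4 * wedge σ ω x Finset.univ := by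
    intro x hx
    have hσe : σ x ∅ = 0 := hσ1 x ∅ (by decide)
    have hσ01 : σ x {0,1} = 0 := hσ1 x {0,1} (by decide)
    have hσ02 : σ x {0,2} = 0 := hσ1 x {0,2} (by decide)
    have hσ12 : σ x {1,2} = 0 := hσ1 x {1,2} (by decide)
    have hσu : σ x {0,1,2} = 0 := hσ1 x {0,1,2} (by decide)
    have hωe : ω x ∅ = 0 := hω2 x ∅ (by decide)
    have hω0 : ω x {0} = 0 := hω2 x {0} (by decide)
    have hω1 : ω x {1} = 0 := hω2 x {1} (by decide)
    have hω22 : ω x {2} = 0 := hω2 x {2} (by decide)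
    have hωu : ω x {0,1,2} = 0 := hω2 x {0,1,2} (by decide)
    have hwe : ∀ T : Finset (Fin 3), T.card ≠ 3 → wedge σ ω x T = 0 :=
      fun T hT => wedge_ne3 σ ω hσ1 hω2 hT x
    have hcσ : ∀ S, (starRingEnd ℂ) (σ x S) = σ x S :=
      fun S => Complex.conj_eq_iff_im.mpr (hσr x S)
    have hcω : ∀ S, (starRingEnd ℂ) (ω x S) = ω x S :=
      fun S => Complex.conj_eq_iff_im.mpr (hωr x S)
    have hcw : (starRingEnd ℂ) (wedge σ ω x Finset.univ) = wedge σ ω x Finset.univ := by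
      unfold MForm.wedge
      rw [map_sum]
      refine Finset.sum_congr rfl fun T _ => ?_
      rw [map_mul, map_mul, hcσ, hcω]
      congr 1
      unfold MForm.mergeSign
      rw [map_pow]
      norm_num
    have hwE : wedge σ ω x ∅ = 0 := hwe ∅ (by decide)
    have hw0 : wedge σ ω x {0} = 0 := hwe {0} (by decide)
    have hw1' : wedge σ ω x {1} = 0 := hwe {1} (by decide)
    have hw2 : wedge σ ω x {2} = 0 := hwe {2} (by decide)
    have hw01 : wedge σ ω x {0,1} = 0 := hwe {0,1} (by decide)
    have hw02 : wedge σ ω x {0,2} = 0 := hwe {0,2} (by decide)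
    have hw12 : wedge σ ω x {1,2} = 0 := hwe {1,2} (by decide)
    have hw1 : wedge σ ω x Finset.univ =
        σ x {0} * ω x {1,2} - σ x {1} * ω x {0,2} + σ x {2} * ω x {0,1} := by
      rw [wedge_univ, hσe, hσ01, hσ02, hσ12, hσu, hωe, hω0, hω1, hω22, hωu]; ring
    have hwu : wedge σ ω x {0,1,2} =
        σ x {0} * ω x {1,2} - σ x {1} * ω x {0,2} + σ x {2} * ω x {0,1} := by
      rw [show ({0,1,2} : Finset (Fin 3)) = Finset.univ from by decide, hw1]
    simp only [pairB3, Pi.sub_apply]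
    rw [wedge_univ, wedge_univ, hw1]
    simp only [MForm.rev, MForm.evenPart, MForm.oddPart, MForm.conjF, Pi.add_apply,
      Pi.smul_apply, Pi.sub_apply, smul_eq_mul, oneF]
    norm_num
    simp only [show ({1,2} : Finset (Fin 3)).card = 2 from by decide,
      show ({0,2} : Finset (Fin 3)).card = 2 from by decide,
      show ({0,1} : Finset (Fin 3)).card = 2 from by decide,
      show ({0,1,2} : Finset (Fin 3)).card = 3 from by decide]
    norm_num
    simp only [hσe, hσ01, hσ02, hσ12, hσu, hωe, hω0, hω1, hω22, hωu,
      hwE, hw0, hw1', hw2, hw01, hw02, hw12, hwu,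
      map_sub, map_add, map_mul, map_zero, Complex.conj_I, hcσ, hcω]
    ring_nf
    simp only [Complex.I_sq]
    ring
  refine ⟨?_, hpart2, fun x hx => by
    rw [hpart2 x hx]; exact mul_ne_zero (by norm_num) (hnv x hx)⟩
  · intro x hx S
    have key : ∀ i ∈ S,
        fderiv ℝ (fun y => (oneF + Complex.I • σ + Complex.I • ω - wedge σ ω) y (S.erase i)) x
            (Pi.single i 1)
          = Complex.I * fderiv ℝ (fun y => σ y (S.erase i)) x (Pi.single i 1)
            + Complex.I * fderiv ℝ (fun y => ω y (S.erase i)) x (Pi.single i 1) := by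
      intro i hi
      have hcard : (S.erase i).card ≠ 3 := by
        have h1 := Finset.card_erase_of_mem hi
        have h2 : S.card ≤ 3 := by simpa using Finset.card_le_univ S
        omega
      have hfun : (fun y => (oneF + Complex.I • σ + Complex.I • ω - wedge σ ω) y (S.erase i))
          = fun y => (if S.erase i = ∅ then (1:ℂ) else 0)
              + (Complex.I * σ y (S.erase i) + Complex.I * ω y (S.erase i)) := by
        funext y
        simp only [Pi.add_apply, Pi.sub_apply, Pi.smul_apply, smul_eq_mul, oneF,
          wedge_ne3 σ ω hσ1 hω2 hcard y]
        ring
      have hdσ : DifferentiableAt ℝ (fun y => σ y (S.erase i)) x :=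
        ((hσs (S.erase i)).contDiffAt (hU.mem_nhds hx)).differentiableAt (by simp)
      have hdω : DifferentiableAt ℝ (fun y => ω y (S.erase i)) x :=
        ((hωs (S.erase i)).contDiffAt (hU.mem_nhds hx)).differentiableAt (by simp)
      rw [hfun, fderiv_const_add, fderiv_fun_add (hdσ.const_mul _) (hdω.const_mul _),
        fderiv_const_mul hdσ, fderiv_const_mul hdω]
      simp
    show MForm.extDer _ x S = 0
    unfold MForm.extDer
    calc ∑ i ∈ S, (-1 : ℂ) ^ (S.filter fun j => j < i).card *
          fderiv ℝ (fun y => (oneF + Complex.I • σ + Complex.I • ω - wedge σ ω) y (S.erase i)) x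
            (Pi.single i 1)
        = ∑ i ∈ S, (Complex.I * ((-1 : ℂ) ^ (S.filter fun j => j < i).card *
              fderiv ℝ (fun y => σ y (S.erase i)) x (Pi.single i 1))
            + Complex.I * ((-1 : ℂ) ^ (S.filter fun j => j < i).card *
              fderiv ℝ (fun y => ω y (S.erase i)) x (Pi.single i 1))) :=
          Finset.sum_congr rfl fun i hi => by rw [key i hi]; ring
      _ = Complex.I * MForm.extDer σ x S + Complex.I * MForm.extDer ω x S := by
          rw [Finset.sum_add_distrib, ← Finset.mul_sum, ← Finset.mul_sum]; rfl
      _ = 0 := by rw [hσcl x hx S, hωcl x hx S]; ring
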